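/- Let L = L₀ ⊕ L₁ be a non-degenerate naturally graded Leibniz superalgebra over ℂ with super-nilindex (2,2). Then there exist α ∈ ℂ and a basis {X₁,X₂} of L₀, {Y₁,Y₂} of L₁ in which the only nonzero products are [X₁,X₁] = X₂, [Y₁,X₁] = Y₂, [X₁,Y₁] = αY₂, [Y₁,Y₁] = X₂. -/
import Mathlib


/-- The sign `(-1)^(j·k)` for parities `j k : ZMod 2`, as a complex scalar. -/
def ssign (i j : ZMod 2) : ℂ := if i = 1 ∧ j = 1 then -1 else 1

/-- A (complex) Leibniz superalgebra structure on the vector space `V`: a ℤ₂-grading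
`g` whose parts are complementary, together with an even bilinear product satisfying
the super Leibniz identity
`[x,[y,z]] = [[x,y],z] − (−1)^{|y||z|}[[x,z],y]` for homogeneous `y, z`. -/
structure LeibnizSuperAlg (V : Type*) [AddCommGroup V] [Module ℂ V] where
  g : ZMod 2 → Submodule ℂ V
  bk : V →ₗ[ℂ] V →ₗ[ℂ] V
  compl : IsCompl (g 0) (g 1)
  grading : ∀ i j : ZMod 2, ∀ x ∈ g i, ∀ y ∈ g j, bk x y ∈ g (i + j)
  leibniz : ∀ j k : ZMod 2, ∀ x : V, ∀ y ∈ g j, ∀ z ∈ g k,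
    bk x (bk y z) = bk (bk x y) z - ssign j k • bk (bk x z) y

namespace LeibnizSuperAlg

variable {V : Type*} [AddCommGroup V] [Module ℂ V]

/-- The descending sequences `C⁰(L_i) = L_i`, `C^{k+1}(L_i) = [C^k(L_i), L₀]`. -/
def C (A : LeibnizSuperAlg V) (i : ZMod 2) : ℕ → Submodule ℂ V
  | 0 => A.g i
  | k + 1 => Submodule.span ℂ {z | ∃ x ∈ C A i k, ∃ y ∈ A.g 0, z = A.bk x y}

/-- The descending central sequence of the whole superalgebra. -/
def DC (A : LeibnizSuperAlg V) : ℕ → Submodule ℂ V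
  | 0 => ⊤
  | k + 1 => Submodule.span ℂ {z | ∃ x ∈ DC A k, ∃ y : V, z = A.bk x y}

/-- Nilpotency: the descending central sequence reaches zero. -/
def IsNilpotent (A : LeibnizSuperAlg V) : Prop := ∃ k, A.DC k = ⊥

/-- `A` is nilpotent with `dim L₀ = n`, `dim L₁ = m` and super-nilindex `(n, m)`
(the maximal possible value). -/
def HasMaxSNilindex (A : LeibnizSuperAlg V) (n m : ℕ) : Prop :=
  A.IsNilpotent ∧ Module.finrank ℂ (A.g 0) = n ∧ Module.finrank ℂ (A.g 1) = m ∧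
    A.C 0 (n - 1) ≠ ⊥ ∧ A.C 1 (m - 1) ≠ ⊥ ∧ A.C 0 n = ⊥ ∧ A.C 1 m = ⊥

/-- Non-degeneracy: the product does not vanish identically on `L₁ × L₁`. -/
def NonDegenerate (A : LeibnizSuperAlg V) : Prop :=
  ∃ x ∈ A.g 1, ∃ y ∈ A.g 1, A.bk x y ≠ 0

/-- `A` is naturally graded: there are subspaces `W a i` (`i ≥ 1`, parity `a`), splitting
the filtrations `C` (so that `W a i ≅ C^{i-1}(L_a)/C^i(L_a)` and `L ≅ gr(L)` in the
natural way) and compatible with the product (so `gr(L)` is a graded Leibniz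
superalgebra, `[Lⁱ, Lʲ] ⊆ L^{i+j}`).  For finite-dimensional nilpotent superalgebras
this is equivalent to the textbook definition `L ≅ gr(L)` with `gr(L)` graded. -/
def NaturallyGraded (A : LeibnizSuperAlg V) : Prop :=
  ∃ W : ZMod 2 → ℕ → Submodule ℂ V,
    (∀ a, W a 0 = ⊥) ∧
    (∀ a k, A.C a k = W a (k + 1) ⊔ A.C a (k + 1)) ∧
    (∀ a k, W a (k + 1) ⊓ A.C a (k + 1) = ⊥) ∧
    (∀ a b : ZMod 2, ∀ i j : ℕ, ∀ x ∈ W a i, ∀ y ∈ W b j, A.bk x y ∈ W (a + b) (i + j))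

/-- `X 1, …, X n` and `Y 1, …, Y m` form an adapted basis of the superalgebra:
the `X i` are even, the `Y j` are odd, and together they form a basis of `V`. -/
def IsAdaptedBasis (A : LeibnizSuperAlg V) (n m : ℕ) (X Y : ℕ → V) : Prop :=
  (∀ i, 1 ≤ i → i ≤ n → X i ∈ A.g 0) ∧ (∀ j, 1 ≤ j → j ≤ m → Y j ∈ A.g 1) ∧
  LinearIndependent ℂ
    (Sum.elim (fun i : Fin n => X (i.val + 1)) (fun j : Fin m => Y (j.val + 1))) ∧
  Submodule.span ℂ
    (Set.range (Sum.elim (fun i : Fin n => X (i.val + 1)) (fun j : Fin m => Y (j.val + 1)))) = ⊤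

end LeibnizSuperAlg

private lemma expand4 {V : Type*} [AddCommGroup V] [Module ℂ V]
    (B : V →ₗ[ℂ] V →ₗ[ℂ] V) (s t s' t' : ℂ) (p q r w : V) :
    B (s•p + t•q) (s'•r + t'•w) =
      (s*s')•(B p r) + (s*t')•(B p w) + (t*s')•(B q r) + (t*t')•(B q w) := by
  simp only [map_add, map_smul, LinearMap.add_apply, LinearMap.smul_apply, smul_add, smul_smul]
  module

private lemma rank_one_gen {V : Type*} [AddCommGroup V] [Module ℂ V] [FiniteDimensional ℂ V]
    {W : Submodule ℂ V} (h : Module.finrank ℂ W = 1) :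
    ∃ v : V, v ≠ 0 ∧ W = Submodule.span ℂ {v} := by
  have hne : W ≠ ⊥ := by
    intro hb
    rw [hb, finrank_bot] at h
    exact zero_ne_one h
  obtain ⟨v, hv, hv0⟩ := Submodule.exists_mem_ne_zero_of_ne_bot hne
  refine ⟨v, hv0, ?_⟩
  exact (Submodule.eq_of_le_of_finrank_eq
    ((Submodule.span_singleton_le_iff_mem v W).mpr hv)
    (by rw [finrank_span_singleton hv0, h])).symm

/-- Every non-degenerate naturally graded Leibniz superalgebra with super-nilindex
`(2,2)` has, for some `α ∈ ℂ`, a basis in which the only nonzero products are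
`[X₁,X₁] = X₂`, `[Y₁,X₁] = Y₂`, `[X₁,Y₁] = αY₂`, `[Y₁,Y₁] = X₂`. -/
theorem stmt11 {V : Type*} [AddCommGroup V] [Module ℂ V] [FiniteDimensional ℂ V] (A : LeibnizSuperAlg V)
    (h : A.HasMaxSNilindex 2 2) (hnd : A.NonDegenerate) (hng : A.NaturallyGraded) :
    ∃ α : ℂ, ∃ X Y : ℕ → V, A.IsAdaptedBasis 2 2 X Y ∧
    (∀ i j : ℕ, 1 ≤ i → i ≤ 2 → 1 ≤ j → j ≤ 2 → A.bk (X i) (X j) =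
      if i = 1 ∧ j = 1 then X 2 else 0) ∧
    (∀ i j : ℕ, 1 ≤ i → i ≤ 2 → 1 ≤ j → j ≤ 2 → A.bk (X i) (Y j) =
      if i = 1 ∧ j = 1 then α • Y 2 else 0) ∧
    (∀ i j : ℕ, 1 ≤ i → i ≤ 2 → 1 ≤ j → j ≤ 2 → A.bk (Y i) (X j) =
      if i = 1 ∧ j = 1 then Y 2 else 0) ∧
    (∀ i j : ℕ, 1 ≤ i → i ≤ 2 → 1 ≤ j → j ≤ 2 → A.bk (Y i) (Y j) =
      if i = 1 ∧ j = 1 then X 2 else 0) := by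
  classical
  obtain ⟨W, hW0, hWs, hWd, hWm⟩ := hng
  obtain ⟨-, hfr0, hfr1, hC01ne, hC11ne, hC02, hC12⟩ := h
  have hCzero : ∀ a : ZMod 2, A.C a 0 = A.g a := fun a => rfl
  have hCsucc : ∀ (a : ZMod 2) (k : ℕ),
      A.C a (k+1) = Submodule.span ℂ {z | ∃ x ∈ A.C a k, ∃ y ∈ A.g 0, z = A.bk x y} :=
    fun a k => rfl
  have hCbot : ∀ (a : ZMod 2) (k : ℕ), A.C a k = ⊥ → A.C a (k+1) = ⊥ := by
    intro a k hk
    rw [hCsucc, Submodule.span_eq_bot]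
    rintro z ⟨x, hx, y, -, rfl⟩
    rw [hk, Submodule.mem_bot] at hx
    simp [hx]
  have hC03 : A.C 0 3 = ⊥ := hCbot 0 2 hC02
  have hC13 : A.C 1 3 = ⊥ := hCbot 1 2 hC12
  have hW03 : W 0 3 = ⊥ := (sup_eq_bot_iff.mp ((hWs 0 2).symm.trans hC02)).1
  have hW04 : W 0 4 = ⊥ := (sup_eq_bot_iff.mp ((hWs 0 3).symm.trans hC03)).1
  have hW13 : W 1 3 = ⊥ := (sup_eq_bot_iff.mp ((hWs 1 2).symm.trans hC12)).1
  have hW14 : W 1 4 = ⊥ := (sup_eq_bot_iff.mp ((hWs 1 3).symm.trans hC13)).1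
  have hCW02 : A.C 0 1 = W 0 2 := by rw [hWs 0 1, hC02, sup_bot_eq]
  have hCW12 : A.C 1 1 = W 1 2 := by rw [hWs 1 1, hC12, sup_bot_eq]
  have hg0 : A.g 0 = W 0 1 ⊔ W 0 2 := by rw [← hCzero 0, hWs 0 0, hCW02]
  have hg1 : A.g 1 = W 1 1 ⊔ W 1 2 := by rw [← hCzero 1, hWs 1 0, hCW12]
  have hW02ne : W 0 2 ≠ ⊥ := hCW02 ▸ hC01ne
  have hW12ne : W 1 2 ≠ ⊥ := hCW12 ▸ hC11ne
  have zprod : ∀ (p q : ZMod 2) (i j : ℕ) (u v : V), u ∈ W p i → v ∈ W q j →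
      ∀ (r : ZMod 2) (s : ℕ), p + q = r → i + j = s → W r s = ⊥ → A.bk u v = 0 := by
    rintro p q i j u v hu hv r s rfl rfl hW
    have := hWm p q i j u hu v hv
    rw [hW] at this
    simpa using this
  have hW01ne : W 0 1 ≠ ⊥ := by
    intro hbot
    apply hC01ne
    rw [hCsucc, Submodule.span_eq_bot]
    rintro z ⟨x, hx, y, hy, rfl⟩
    have hx' : x ∈ A.g 0 := hx
    have hy' : y ∈ A.g 0 := hy
    rw [hg0, hbot, bot_sup_eq] at hx' hy'
    exact zprod 0 0 2 2 x y hx' hy' 0 4 (by decide) rfl hW04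
  have hW11ne : W 1 1 ≠ ⊥ := by
    intro hbot
    apply hC11ne
    rw [hCsucc, Submodule.span_eq_bot]
    rintro z ⟨x, hx, y, hy, rfl⟩
    have hx' : x ∈ A.g 1 := hx
    have hy' : y ∈ A.g 0 := hy
    rw [hg1, hbot, bot_sup_eq] at hx'
    rw [hg0] at hy'
    obtain ⟨u, hu, v, hv, rfl⟩ := Submodule.mem_sup.mp hy'
    rw [map_add,
      zprod 1 0 2 1 x u hx' hu 1 3 (by decide) rfl hW13,
      zprod 1 0 2 2 x v hx' hv 1 4 (by decide) rfl hW14, add_zero]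
  have hfin01 : Module.finrank ℂ (W 0 1) = 1 ∧ Module.finrank ℂ (W 0 2) = 1 := by
    have h1 := Submodule.finrank_sup_add_finrank_inf_eq (W 0 1) (W 0 2)
    have h2 : W 0 1 ⊓ W 0 2 = ⊥ := by rw [← hCW02]; exact hWd 0 0
    rw [h2, ← hg0, hfr0, finrank_bot] at h1
    have e1 : Module.finrank ℂ (W 0 1) ≠ 0 :=
      fun hh => hW01ne (Submodule.finrank_eq_zero.mp hh)
    have e2 : Module.finrank ℂ (W 0 2) ≠ 0 :=
      fun hh => hW02ne (Submodule.finrank_eq_zero.mp hh)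
    omega
  have hfin11 : Module.finrank ℂ (W 1 1) = 1 ∧ Module.finrank ℂ (W 1 2) = 1 := by
    have h1 := Submodule.finrank_sup_add_finrank_inf_eq (W 1 1) (W 1 2)
    have h2 : W 1 1 ⊓ W 1 2 = ⊥ := by rw [← hCW12]; exact hWd 1 0
    rw [h2, ← hg1, hfr1, finrank_bot] at h1
    have e1 : Module.finrank ℂ (W 1 1) ≠ 0 :=
      fun hh => hW11ne (Submodule.finrank_eq_zero.mp hh)
    have e2 : Module.finrank ℂ (W 1 2) ≠ 0 :=
      fun hh => hW12ne (Submodule.finrank_eq_zero.mp hh)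
    omega
  obtain ⟨x1, hx1ne, hW01s⟩ := rank_one_gen hfin01.1
  obtain ⟨x2, hx2ne, hW02s⟩ := rank_one_gen hfin01.2
  obtain ⟨y1, hy1ne, hW11s⟩ := rank_one_gen hfin11.1
  obtain ⟨y2, hy2ne, hW12s⟩ := rank_one_gen hfin11.2
  have hx1m : x1 ∈ W 0 1 := hW01s ▸ Submodule.mem_span_singleton_self x1
  have hx2m : x2 ∈ W 0 2 := hW02s ▸ Submodule.mem_span_singleton_self x2
  have hy1m : y1 ∈ W 1 1 := hW11s ▸ Submodule.mem_span_singleton_self y1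
  have hy2m : y2 ∈ W 1 2 := hW12s ▸ Submodule.mem_span_singleton_self y2
  have coef : ∀ (p q : ZMod 2) (i j : ℕ) (u v : V) (r : ZMod 2) (s : ℕ) (w : V),
      u ∈ W p i → v ∈ W q j → p + q = r → i + j = s →
      W r s = Submodule.span ℂ {w} → ∃ t : ℂ, A.bk u v = t • w := by
    rintro p q i j u v r s w hu hv rfl rfl hW
    have := hWm p q i j u hu v hv
    rw [hW] at this
    obtain ⟨t, ht⟩ := Submodule.mem_span_singleton.mp this
    exact ⟨t, ht.symm⟩
  obtain ⟨a, pxx⟩ := coef 0 0 1 1 x1 x1 0 2 x2 hx1m hx1m (by decide) rfl hW02s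
  obtain ⟨c, pxy⟩ := coef 0 1 1 1 x1 y1 1 2 y2 hx1m hy1m (by decide) rfl hW12s
  obtain ⟨b, pyx⟩ := coef 1 0 1 1 y1 x1 1 2 y2 hy1m hx1m (by decide) rfl hW12s
  obtain ⟨d, pyy⟩ := coef 1 1 1 1 y1 y1 0 2 x2 hy1m hy1m (by decide) rfl hW02s
  have z_x1x2 : A.bk x1 x2 = 0 := zprod 0 0 1 2 x1 x2 hx1m hx2m 0 3 (by decide) rfl hW03
  have z_x2x1 : A.bk x2 x1 = 0 := zprod 0 0 2 1 x2 x1 hx2m hx1m 0 3 (by decide) rfl hW03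
  have z_x2x2 : A.bk x2 x2 = 0 := zprod 0 0 2 2 x2 x2 hx2m hx2m 0 4 (by decide) rfl hW04
  have z_x1y2 : A.bk x1 y2 = 0 := zprod 0 1 1 2 x1 y2 hx1m hy2m 1 3 (by decide) rfl hW13
  have z_x2y1 : A.bk x2 y1 = 0 := zprod 0 1 2 1 x2 y1 hx2m hy1m 1 3 (by decide) rfl hW13
  have z_x2y2 : A.bk x2 y2 = 0 := zprod 0 1 2 2 x2 y2 hx2m hy2m 1 4 (by decide) rfl hW14
  have z_y1x2 : A.bk y1 x2 = 0 := zprod 1 0 1 2 y1 x2 hy1m hx2m 1 3 (by decide) rfl hW13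
  have z_y2x1 : A.bk y2 x1 = 0 := zprod 1 0 2 1 y2 x1 hy2m hx1m 1 3 (by decide) rfl hW13
  have z_y2x2 : A.bk y2 x2 = 0 := zprod 1 0 2 2 y2 x2 hy2m hx2m 1 4 (by decide) rfl hW14
  have z_y1y2 : A.bk y1 y2 = 0 := zprod 1 1 1 2 y1 y2 hy1m hy2m 0 3 (by decide) rfl hW03
  have z_y2y1 : A.bk y2 y1 = 0 := zprod 1 1 2 1 y2 y1 hy2m hy1m 0 3 (by decide) rfl hW03
  have z_y2y2 : A.bk y2 y2 = 0 := zprod 1 1 2 2 y2 y2 hy2m hy2m 0 4 (by decide) rfl hW04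
  have decomp0 : ∀ x ∈ A.g 0, ∃ s t : ℂ, x = s • x1 + t • x2 := by
    intro x hx
    rw [hg0, hW01s, hW02s] at hx
    obtain ⟨u, hu, v, hv, hx⟩ := Submodule.mem_sup.mp hx
    obtain ⟨s, rfl⟩ := Submodule.mem_span_singleton.mp hu
    obtain ⟨t, rfl⟩ := Submodule.mem_span_singleton.mp hv
    exact ⟨s, t, hx.symm⟩
  have decomp1 : ∀ x ∈ A.g 1, ∃ s t : ℂ, x = s • y1 + t • y2 := by
    intro x hx
    rw [hg1, hW11s, hW12s] at hx
    obtain ⟨u, hu, v, hv, hx⟩ := Submodule.mem_sup.mp hx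
    obtain ⟨s, rfl⟩ := Submodule.mem_span_singleton.mp hu
    obtain ⟨t, rfl⟩ := Submodule.mem_span_singleton.mp hv
    exact ⟨s, t, hx.symm⟩
  have ha : a ≠ 0 := by
    intro ha0
    apply hC01ne
    rw [hCsucc, Submodule.span_eq_bot]
    rintro z ⟨x, hx, y, hy, rfl⟩
    obtain ⟨s, t, rfl⟩ := decomp0 x hx
    obtain ⟨s', t', rfl⟩ := decomp0 y hy
    rw [expand4, pxx, z_x1x2, z_x2x1, z_x2x2, ha0]
    simp
  have hb : b ≠ 0 := by
    intro hb0
    apply hC11ne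
    rw [hCsucc, Submodule.span_eq_bot]
    rintro z ⟨x, hx, y, hy, rfl⟩
    obtain ⟨s, t, rfl⟩ := decomp1 x hx
    obtain ⟨s', t', rfl⟩ := decomp0 y hy
    rw [expand4, pyx, z_y1x2, z_y2x1, z_y2x2, hb0]
    simp
  have hd : d ≠ 0 := by
    intro hd0
    obtain ⟨x, hx, y, hy, hne⟩ := hnd
    apply hne
    obtain ⟨s, t, rfl⟩ := decomp1 x hx
    obtain ⟨s', t', rfl⟩ := decomp1 y hy
    rw [expand4, pyy, z_y1y2, z_y2y1, z_y2y2, hd0]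
    simp
  set ζ : ℂ := Complex.exp (Complex.log (a / d) / 2) with hζdef
  have hζ0 : ζ ≠ 0 := Complex.exp_ne_zero _
  have hζ2 : ζ * ζ = a / d := by
    rw [hζdef, ← Complex.exp_add, add_halves, Complex.exp_log (div_ne_zero ha hd)]
  let Xf : ℕ → V := fun n => if n = 1 then x1 else if n = 2 then a • x2 else 0
  let Yf : ℕ → V := fun n => if n = 1 then ζ • y1 else if n = 2 then (ζ * b) • y2 else 0
  have hX1 : Xf 1 = x1 := rfl
  have hX2 : Xf 2 = a • x2 := rfl
  have hY1 : Yf 1 = ζ • y1 := rfl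
  have hY2 : Yf 2 = (ζ * b) • y2 := rfl
  have hspan : Submodule.span ℂ (Set.range (Sum.elim (fun i : Fin 2 => Xf (i.val + 1))
      (fun j : Fin 2 => Yf (j.val + 1)))) = ⊤ := by
    rw [eq_top_iff, ← A.compl.sup_eq_top]
    set S : Set V := Set.range (Sum.elim (fun i : Fin 2 => Xf (i.val + 1))
      (fun j : Fin 2 => Yf (j.val + 1))) with hS
    have m1 : x1 ∈ S := ⟨Sum.inl 0, rfl⟩
    have m2 : a • x2 ∈ S := ⟨Sum.inl 1, rfl⟩
    have m3 : ζ • y1 ∈ S := ⟨Sum.inr 0, rfl⟩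
    have m4 : (ζ * b) • y2 ∈ S := ⟨Sum.inr 1, rfl⟩
    apply sup_le
    · rw [hg0]
      apply sup_le
      · rw [hW01s, Submodule.span_singleton_le_iff_mem]
        exact Submodule.subset_span m1
      · rw [hW02s, Submodule.span_singleton_le_iff_mem]
        have hx2eq : x2 = a⁻¹ • (a • x2) := by
          rw [smul_smul, inv_mul_cancel₀ ha, one_smul]
        rw [hx2eq]
        exact Submodule.smul_mem _ _ (Submodule.subset_span m2)
    · rw [hg1]
      apply sup_le
      · rw [hW11s, Submodule.span_singleton_le_iff_mem]
        have hy1eq : y1 = ζ⁻¹ • (ζ • y1) := by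
          rw [smul_smul, inv_mul_cancel₀ hζ0, one_smul]
        rw [hy1eq]
        exact Submodule.smul_mem _ _ (Submodule.subset_span m3)
      · rw [hW12s, Submodule.span_singleton_le_iff_mem]
        have hy2eq : y2 = (ζ * b)⁻¹ • ((ζ * b) • y2) := by
          rw [smul_smul, inv_mul_cancel₀ (mul_ne_zero hζ0 hb), one_smul]
        rw [hy2eq]
        exact Submodule.smul_mem _ _ (Submodule.subset_span m4)
  have hfrV : Module.finrank ℂ V = 4 := by
    have h1 := Submodule.finrank_sup_add_finrank_inf_eq (A.g 0) (A.g 1)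
    rw [A.compl.sup_eq_top, A.compl.inf_eq_bot, finrank_top, finrank_bot, hfr0, hfr1] at h1
    omega
  have hli : LinearIndependent ℂ (Sum.elim (fun i : Fin 2 => Xf (i.val + 1))
      (fun j : Fin 2 => Yf (j.val + 1))) :=
    linearIndependent_of_top_le_span_of_card_eq_finrank hspan.ge (by simp [hfrV])
  refine ⟨c / b, Xf, Yf, ⟨?_, ?_, hli, hspan⟩, ?_, ?_, ?_, ?_⟩
  · intro i h1 h2
    interval_cases i
    · rw [hX1, hg0]; exact Submodule.mem_sup_left hx1m
    · rw [hX2, hg0]; exact Submodule.smul_mem _ _ (Submodule.mem_sup_right hx2m)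
  · intro j h1 h2
    interval_cases j
    · rw [hY1, hg1]; exact Submodule.smul_mem _ _ (Submodule.mem_sup_left hy1m)
    · rw [hY2, hg1]; exact Submodule.smul_mem _ _ (Submodule.mem_sup_right hy2m)
  · intro i j h1 h2 h3 h4
    interval_cases i <;> interval_cases j
    · rw [if_pos ⟨rfl, rfl⟩, hX1, hX2]; exact pxx
    · rw [if_neg (by norm_num)]; simp [hX1, hX2, z_x1x2]
    · rw [if_neg (by norm_num)]; simp [hX1, hX2, z_x2x1]
    · rw [if_neg (by norm_num)]; simp [hX2, z_x2x2]
  · intro i j h1 h2 h3 h4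
    interval_cases i <;> interval_cases j
    · have e : A.bk x1 (ζ • y1) = (ζ * c) • y2 := by
        simp only [map_smul, pxy, smul_smul]
      rw [if_pos ⟨rfl, rfl⟩, hX1, hY1, hY2, e, smul_smul]
      congr 1
      field_simp
    · rw [if_neg (by norm_num)]; simp [hX1, hY2, z_x1y2]
    · rw [if_neg (by norm_num)]; simp [hX2, hY1, z_x2y1]
    · rw [if_neg (by norm_num)]; simp [hX2, hY2, z_x2y2]
  · intro i j h1 h2 h3 h4
    interval_cases i <;> interval_cases j
    · have e : A.bk (ζ • y1) x1 = (ζ * b) • y2 := by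
        simp only [map_smul, LinearMap.smul_apply, pyx, smul_smul]
      rw [if_pos ⟨rfl, rfl⟩, hY1, hX1, hY2, e]
    · rw [if_neg (by norm_num)]; simp [hY1, hX2, z_y1x2]
    · rw [if_neg (by norm_num)]; simp [hY2, hX1, z_y2x1]
    · rw [if_neg (by norm_num)]; simp [hY2, hX2, z_y2x2]
  · intro i j h1 h2 h3 h4
    interval_cases i <;> interval_cases j
    · have e : A.bk (ζ • y1) (ζ • y1) = (ζ * (ζ * d)) • x2 := by
        simp only [map_smul, LinearMap.smul_apply, pyy, smul_smul]
      rw [if_pos ⟨rfl, rfl⟩, hY1, hX2, e]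
      congr 1
      rw [← mul_assoc, hζ2]
      field_simp
    · rw [if_neg (by norm_num)]; simp [hY1, hY2, z_y1y2]
    · rw [if_neg (by norm_num)]; simp [hY2, hY1, z_y2y1]
    · rw [if_neg (by norm_num)]; simp [hY2, z_y2y2]
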